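/- A triple (x*, y*, σ*) is a variational generalized Nash equilibrium (v-GNE) of the extended game if and only if there exists λ* ∈ ℝ^m_{≥0} such that (x*, y*, σ*, 0_n, λ*) ∈ zer T. Moreover, for any (x*, y*, σ*, μ*, λ*) ∈ zer T one necessarily has μ* = 0_n, σ* = M_n x*, and y_i* = A_i x_i* − b_i for all i. -/

import Mathlib

noncomputable section

open Matrix Finset Filter

/-- A vector in `ℝ^k`. -/
abbrev Vec (k : ℕ) := Fin k → ℝ

/-- A block vector in `ℝ^{kN}` (N blocks of size k). -/
abbrev VecN (N k : ℕ) := Fin N → Vec k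

/-- Standard inner product on `ℝ^k`. -/
def dot {k : ℕ} (u v : Vec k) : ℝ := ∑ j, u j * v j

/-- Standard inner product on `ℝ^{kN}`. -/
def dotN {N k : ℕ} (u v : VecN N k) : ℝ := ∑ i, dot (u i) (v i)

/-- Subdifferential of `g : ℝ^p → ℝ` at `x`. -/
def subdiff {p : ℕ} (g : Vec p → ℝ) (x : Vec p) : Set (Vec p) :=
  {v | ∀ z, g x + dot v (z - x) ≤ g z}

/-- Normal cone of `S ⊆ ℝ^p` at `x` (empty if `x ∉ S`). -/
def normalCone {p : ℕ} (S : Set (Vec p)) (x : Vec p) : Set (Vec p) :=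
  {v | x ∈ S ∧ ∀ z ∈ S, dot v (z - x) ≤ 0}

/-- The nonnegative orthant `ℝ^m_{≥0}`. -/
def orthant (m : ℕ) : Set (Vec m) := {v | ∀ j, 0 ≤ v j}

/-- Euclidean projection onto the nonnegative orthant. -/
def projPos {m : ℕ} (v : Vec m) : Vec m := fun j => max (v j) 0

/-- `M x = (1/N) Σ_i x_i` (the averaging map `M_n`, resp. its `m`-dim analogue). -/
def Mavg {N k : ℕ} (x : VecN N k) : Vec k := (N : ℝ)⁻¹ • ∑ i, x i

/-- `P y = Σ_i y_i`. -/
def Psum {N k : ℕ} (y : VecN N k) : Vec k := ∑ i, y i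

/-- `Mᵀ μ` : transpose of the averaging map. -/
def MavgT (N : ℕ) {k : ℕ} (μ : Vec k) : VecN N k := fun _ => (N : ℝ)⁻¹ • μ

/-- `Pᵀ λ` : transpose of the summing map. -/
def PsumT (N : ℕ) {k : ℕ} (l : Vec k) : VecN N k := fun _ => l

/-- Monotonicity of a set-valued map w.r.t. an inner product `ip`. -/
def MonoOn {V : Type} [AddCommGroup V] (ip : V → V → ℝ) (F : V → Set V) : Prop :=
  ∀ ω ω' u v, u ∈ F ω → v ∈ F ω' → 0 ≤ ip (u - v) (ω - ω')

/-- Maximal monotonicity of a set-valued map w.r.t. an inner product `ip`. -/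
def MaxMonoOn {V : Type} [AddCommGroup V] (ip : V → V → ℝ) (F : V → Set V) : Prop :=
  MonoOn ip F ∧ ∀ ω u, (∀ ω' v, v ∈ F ω' → 0 ≤ ip (u - v) (ω - ω')) → u ∈ F ω

/-- `A x = Σ_i A_i x_i` for `A = [A_1 ⋯ A_N]`. -/
def bigA {N n m : ℕ} (A : Fin N → Matrix (Fin m) (Fin n) ℝ) (x : VecN N n) : Vec m :=
  ∑ i, (A i).mulVec (x i)

/-- The collective feasible set `𝒳 = (∏_i Ω_i) ∩ {x : A x ≤ b}`. -/
def Xfeas {N n m : ℕ} (Ω : Fin N → Set (Vec n)) (A : Fin N → Matrix (Fin m) (Fin n) ℝ)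
    (b : Fin N → Vec m) : Set (VecN N n) :=
  {x | (∀ i, x i ∈ Ω i) ∧ ∀ j, bigA A x j ≤ (∑ i, b i) j}

/-- Extended pseudo-subdifferential `F_e(x, σ)`. -/
def Fe {N n : ℕ} (f : Fin N → Vec n → Vec n → ℝ) (x : VecN N n) (σ : Vec n) :
    Set (VecN N n) :=
  {g | ∀ i, g i ∈ subdiff (fun z => f i z σ) (x i)}

/-- Aggregative pseudo-subdifferential `F_a(x) = F_e(x, M_n x)`. -/
def Fa {N n : ℕ} (f : Fin N → Vec n → Vec n → ℝ) (x : VecN N n) : Set (VecN N n) :=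
  Fe f x (Mavg x)

/-- `x̄` is a variational generalized aggregative equilibrium (v-GAE):
it solves GVI(𝒳, F_a). -/
def isVGAE {N n m : ℕ} (Ω : Fin N → Set (Vec n)) (f : Fin N → Vec n → Vec n → ℝ)
    (A : Fin N → Matrix (Fin m) (Fin n) ℝ) (b : Fin N → Vec m) (xbar : VecN N n) : Prop :=
  xbar ∈ Xfeas Ω A b ∧ ∃ g ∈ Fa f xbar, ∀ x ∈ Xfeas Ω A b, 0 ≤ dotN g (x - xbar)

/-- The local constraint set `C = {(x,y) : x_i ∈ Ω_i, y_i = A_i x_i - b_i}`. -/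
def Cset {N n m : ℕ} (Ω : Fin N → Set (Vec n)) (A : Fin N → Matrix (Fin m) (Fin n) ℝ)
    (b : Fin N → Vec m) : Set (VecN N n × VecN N m) :=
  {p | ∀ i, p.1 i ∈ Ω i ∧ p.2 i = (A i).mulVec (p.1 i) - b i}

/-- Inner product on `ℝ^{nN} × ℝ^{mN}`. -/
def ip2 {N n m : ℕ} (p q : VecN N n × VecN N m) : ℝ := dotN p.1 q.1 + dotN p.2 q.2

/-- Normal cone in `ℝ^{nN} × ℝ^{mN}` (empty outside the set). -/
def nconeC {N n m : ℕ} (C : Set (VecN N n × VecN N m)) (p : VecN N n × VecN N m) :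
    Set (VecN N n × VecN N m) :=
  {v | p ∈ C ∧ ∀ q ∈ C, ip2 v (q - p) ≤ 0}

/-- Inner product on `ℝ^{nN} × ℝ^{mN} × ℝ^n`. -/
def ip3 {N n m : ℕ} (p q : VecN N n × VecN N m × Vec n) : ℝ :=
  dotN p.1 q.1 + dotN p.2.1 q.2.1 + dot p.2.2 q.2.2

/-- Coupling constraint set `𝒱` of the extended game. -/
def Vfeas (N n m : ℕ) : Set (VecN N n × VecN N m × Vec n) :=
  {w | (∀ j, Psum w.2.1 j ≤ 0) ∧ w.2.2 = Mavg w.1}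

/-- The operator `𝒰(x,y,σ) = {(g + u, w, 0) : g ∈ F_e(x,σ), (u,w) ∈ N_C(x,y)}`. -/
def Uop {N n m : ℕ} (Ω : Fin N → Set (Vec n)) (f : Fin N → Vec n → Vec n → ℝ)
    (A : Fin N → Matrix (Fin m) (Fin n) ℝ) (b : Fin N → Vec m)
    (x : VecN N n) (y : VecN N m) (σ : Vec n) : Set (VecN N n × VecN N m × Vec n) :=
  {h | ∃ g ∈ Fe f x σ, ∃ uw ∈ nconeC (Cset Ω A b) (x, y), h = (g + uw.1, uw.2, 0)}

/-- `(x,y,σ)` is a v-GNE of the extended game: it solves GVI(𝒱, 𝒰). -/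
def isVGNEext {N n m : ℕ} (Ω : Fin N → Set (Vec n)) (f : Fin N → Vec n → Vec n → ℝ)
    (A : Fin N → Matrix (Fin m) (Fin n) ℝ) (b : Fin N → Vec m)
    (x : VecN N n) (y : VecN N m) (σ : Vec n) : Prop :=
  (x, y, σ) ∈ Vfeas N n m ∧
    ∃ h ∈ Uop Ω f A b x y σ, ∀ w ∈ Vfeas N n m, 0 ≤ ip3 h (w - (x, y, σ))

/-- The extended space `ℝ^d = ℝ^{nN} × ℝ^{mN} × ℝ^n × ℝ^n × ℝ^m`. -/
abbrev St (N n m : ℕ) := VecN N n × VecN N m × Vec n × Vec n × Vec m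

/-- Inner product on the extended space. -/
def ipS {N n m : ℕ} (u v : St N n m) : ℝ :=
  dotN u.1 v.1 + dotN u.2.1 v.2.1 + dot u.2.2.1 v.2.2.1 + dot u.2.2.2.1 v.2.2.2.1 +
    dot u.2.2.2.2 v.2.2.2.2

/-- `(x,y,σ,μ,λ) ∈ zer T` for the KKT operator `T`. -/
def inZerT {N n m : ℕ} (Ω : Fin N → Set (Vec n)) (f : Fin N → Vec n → Vec n → ℝ)
    (A : Fin N → Matrix (Fin m) (Fin n) ℝ) (b : Fin N → Vec m)
    (x : VecN N n) (y : VecN N m) (σ μ : Vec n) (lam : Vec m) : Prop :=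
  ∃ g ∈ Fe f x σ, ∃ uw ∈ nconeC (Cset Ω A b) (x, y), ∃ v ∈ normalCone (orthant m) lam,
    g + uw.1 - MavgT N μ = 0 ∧ uw.2 + PsumT N lam = 0 ∧ μ = 0 ∧ Mavg x - σ = 0 ∧
      v - Psum y = 0

/-- Inner product on `ℝ^{nN} × ℝ^n`. -/
def ipXs {N n : ℕ} (p q : VecN N n × Vec n) : ℝ := dotN p.1 q.1 + dot p.2 q.2

/-- The extended pseudo-subdifferential map `(x,σ) ↦ F_e(x,σ) × {0}`. -/
def FeExt {N n : ℕ} (f : Fin N → Vec n → Vec n → ℝ) (p : VecN N n × Vec n) :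
    Set (VecN N n × Vec n) :=
  {q | q.1 ∈ Fe f p.1 p.2 ∧ q.2 = 0}

/-- The operator `𝒜(x,y,σ,μ,λ) = (F_e(x,σ) + N_C(x,y)-part, 0, 0, 0)`. -/
def Aop {N n m : ℕ} (Ω : Fin N → Set (Vec n)) (f : Fin N → Vec n → Vec n → ℝ)
    (A : Fin N → Matrix (Fin m) (Fin n) ℝ) (b : Fin N → Vec m) (ω : St N n m) :
    Set (St N n m) :=
  {t | ∃ g ∈ Fe f ω.1 ω.2.2.1, ∃ uw ∈ nconeC (Cset Ω A b) (ω.1, ω.2.1),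
    t = (g + uw.1, uw.2, 0, 0, 0)}

/-- The skew-symmetric linear map `S`. -/
def Smap {N n m : ℕ} (ω : St N n m) : St N n m :=
  (-MavgT N ω.2.2.2.1, PsumT N ω.2.2.2.2, ω.2.2.2.1, Mavg ω.1 - ω.2.2.1, -Psum ω.2.1)

/-- The operator `ℬ = S + (0,0,0,0, N_{ℝ^m_{≥0}})`. -/
def Bop {N n m : ℕ} (ω : St N n m) : Set (St N n m) :=
  {t | ∃ v ∈ normalCone (orthant m) ω.2.2.2.2, t = Smap ω + (0, 0, 0, 0, v)}

/-- The block-diagonal positive-definite step-size matrix `Γ` acting on the extended space. -/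
def GammaMap {N n m : ℕ} (γ : Fin N → ℝ) (α β δ : ℝ) (ω : St N n m) : St N n m :=
  (fun i => γ i • ω.1 i, fun i => γ i • ω.2.1 i, α • ω.2.2.1, β • ω.2.2.2.1,
    δ • ω.2.2.2.2)

/-!
Since `σ` is pinned to `M_n x` and the last component of every `h ∈ 𝒰` vanishes, the
variational inequality over `𝒱` splits into one over all `x`, which forces `g + u = 0`, and one
over the cone `{y : P y ≤ 0}`. Testing the latter along `ker P` shows `w ⊥ ker P`, so
`w = -Pᵀλ` with `λ = -M w`; as `P` is onto, what remains says `λ ∈ N_{ℝ^m_{≤0}}(P y)`, which by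
polarity of the orthant is the same as `P y ∈ N_{ℝ^m_{≥0}}(λ)`.
-/

lemma dot_eq_dotProduct {k : ℕ} (u v : Vec k) : dot u v = u ⬝ᵥ v := rfl

section BlockVectors

variable {N k : ℕ}

lemma dotN_sub_left (u v w : VecN N k) : dotN (u - v) w = dotN u w - dotN v w := by
  simp [dotN, dot_eq_dotProduct, sub_dotProduct, Finset.sum_sub_distrib]

lemma dotN_neg_right (u v : VecN N k) : dotN u (-v) = -dotN u v := by
  simp [dotN, dot_eq_dotProduct, Finset.sum_neg_distrib]

lemma dotN_zero_left (u : VecN N k) : dotN 0 u = 0 := by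
  simp [dotN, dot_eq_dotProduct]

lemma dotN_zero_right (u : VecN N k) : dotN u 0 = 0 := by
  simp [dotN, dot_eq_dotProduct]

lemma dotN_self_nonneg (u : VecN N k) : 0 ≤ dotN u u :=
  Finset.sum_nonneg fun _ _ => Finset.sum_nonneg fun _ _ => mul_self_nonneg _

lemma dotN_self_eq_zero {u : VecN N k} : dotN u u = 0 ↔ u = 0 := by
  simp only [dotN, dot_eq_dotProduct]
  have hnonneg : ∀ i ∈ Finset.univ, 0 ≤ u i ⬝ᵥ u i := fun i _ =>
    Finset.sum_nonneg fun j _ => mul_self_nonneg (u i j)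
  rw [Finset.sum_eq_zero_iff_of_nonneg hnonneg]
  simp only [dotProduct_self_eq_zero, Finset.mem_univ, true_implies]
  exact funext_iff.symm

lemma eq_zero_of_forall_dotN_nonneg {u : VecN N k} (h : ∀ d, 0 ≤ dotN u d) : u = 0 := by
  have h' := h (-u)
  rw [dotN_neg_right, neg_nonneg] at h'
  exact dotN_self_eq_zero.1 (le_antisymm h' (dotN_self_nonneg u))

lemma psum_add (y y' : VecN N k) : Psum (y + y') = Psum y + Psum y' :=
  Finset.sum_add_distrib

lemma psum_sub (y y' : VecN N k) : Psum (y - y') = Psum y - Psum y' :=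
  Finset.sum_sub_distrib ..

lemma psum_psumT (l : Vec k) : Psum (PsumT N l) = (N : ℝ) • l := by
  rw [Psum, show PsumT N l = fun _ => l from rfl, Finset.sum_const, Finset.card_univ,
    Fintype.card_fin, Nat.cast_smul_eq_nsmul]

lemma psum_psumT_mavg (w : VecN N k) : Psum (PsumT N (Mavg w)) = Psum w := by
  rcases N.eq_zero_or_pos with rfl | hN
  · simp [Psum]
  · rw [psum_psumT, Mavg, smul_smul, mul_inv_cancel₀ (by positivity), one_smul, Psum]

lemma psum_mavgT (hN : 0 < N) (s : Vec k) : Psum (MavgT N s) = s := by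
  rw [show MavgT N s = PsumT N ((N : ℝ)⁻¹ • s) from rfl, psum_psumT, smul_smul,
    mul_inv_cancel₀ (by positivity), one_smul]

lemma psumT_neg (l : Vec k) : PsumT N (-l) = -PsumT N l := rfl

lemma dotN_psumT (l : Vec k) (y : VecN N k) : dotN (PsumT N l) y = dot l (Psum y) := by
  simp [dotN, PsumT, Psum, dot_eq_dotProduct, dotProduct_sum]

/-- `(ker P)^⊥ = range Pᵀ`, with the explicit preimage `M w`. -/
lemma eq_psumT_mavg_of_dotN_eq_zero {w : VecN N k} (h : ∀ d, Psum d = 0 → dotN w d = 0) :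
    w = PsumT N (Mavg w) := by
  set d := w - PsumT N (Mavg w)
  have hd : Psum d = 0 := by rw [psum_sub, psum_psumT_mavg, sub_self]
  have hdd : dotN d d = 0 := by
    rw [dotN_sub_left, h d hd, dotN_psumT, hd, dot_eq_dotProduct, dotProduct_zero, sub_zero]
  exact sub_eq_zero.1 (dotN_self_eq_zero.1 hdd)

end BlockVectors

section Orthant

variable {m : ℕ}

lemma single_one_nonneg (j : Fin m) : (0 : Vec m) ≤ Pi.single j 1 :=
  Pi.single_nonneg.2 zero_le_one

lemma mem_normalCone_orthant_iff {v lam : Vec m} :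
    v ∈ normalCone (orthant m) lam ↔ (∀ j, 0 ≤ lam j) ∧ (∀ j, v j ≤ 0) ∧ dot v lam = 0 := by
  simp only [normalCone, orthant, Set.mem_ofPred_eq, dot_eq_dotProduct, dotProduct_sub]
  constructor
  · rintro ⟨hlam, hv⟩
    refine ⟨hlam, fun j => ?_, ?_⟩
    · have h := hv (lam + Pi.single j 1) fun i => add_nonneg (hlam i) (single_one_nonneg j i)
      simpa [dotProduct_add, dotProduct_single] using h
    · have h₀ := hv 0 fun _ => le_rfl
      have h₂ := hv (lam + lam) fun i => add_nonneg (hlam i) (hlam i)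
      simp only [dotProduct_zero, dotProduct_add] at h₀ h₂
      linarith
  · rintro ⟨hlam, hv, hc⟩
    refine ⟨hlam, fun z hz => ?_⟩
    rw [hc, sub_zero]
    exact Finset.sum_nonpos fun j _ => mul_nonpos_of_nonpos_of_nonneg (hv j) (hz j)

/-- Polarity of the orthant: `t ∈ N_{ℝ^m_{≥0}}(λ)` iff `λ ∈ N_{ℝ^m_{≤0}}(t)`. -/
lemma mem_normalCone_orthant_iff_forall_dot_le {t lam : Vec m} :
    t ∈ normalCone (orthant m) lam ↔
      (∀ j, t j ≤ 0) ∧ ∀ s : Vec m, (∀ j, s j ≤ 0) → dot lam s ≤ dot lam t := by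
  simp only [mem_normalCone_orthant_iff, dot_eq_dotProduct, dotProduct_comm t lam]
  constructor
  · rintro ⟨hlam, ht, hc⟩
    refine ⟨ht, fun s hs => ?_⟩
    rw [hc]
    exact Finset.sum_nonpos fun j _ => mul_nonpos_of_nonneg_of_nonpos (hlam j) (hs j)
  · rintro ⟨ht, h⟩
    refine ⟨fun j => ?_, ht, ?_⟩
    · have h₁ := h (t - Pi.single j 1) fun i =>
        sub_nonpos_of_le ((ht i).trans (single_one_nonneg j i))
      simpa [dotProduct_sub, dotProduct_single] using h₁
    · have h₀ := h 0 fun _ => le_rfl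
      have h₂ := h (t + t) fun i => add_nonpos (ht i) (ht i)
      simp only [dotProduct_zero, dotProduct_add] at h₀ h₂
      linarith

end Orthant

/-- The variational inequality over `{y : P y ≤ 0}` in KKT form. -/
theorem psum_nonpos_vi_iff {N m : ℕ} (hN : 0 < N) {w y : VecN N m} :
    ((∀ j, Psum y j ≤ 0) ∧ ∀ y' : VecN N m, (∀ j, Psum y' j ≤ 0) → 0 ≤ dotN w (y' - y)) ↔
      ∃ lam, w + PsumT N lam = 0 ∧ Psum y ∈ normalCone (orthant m) lam := by
  have hPT : ∀ lam y', dotN (-PsumT N lam) (y' - y) = dot lam (Psum y) - dot lam (Psum y') := by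
    intro lam y'
    simp only [← psumT_neg, dotN_psumT, psum_sub, dot_eq_dotProduct, neg_dotProduct,
      dotProduct_sub]
    ring
  constructor
  · rintro ⟨hy, hvi⟩
    have hw : w = -PsumT N (-Mavg w) := by
      rw [psumT_neg, neg_neg]
      refine eq_psumT_mavg_of_dotN_eq_zero fun d hd => le_antisymm ?_ ?_
      · have h := hvi (y - d) (by rwa [psum_sub, hd, sub_zero])
        rwa [sub_sub_cancel_left, dotN_neg_right, neg_nonneg] at h
      · have h := hvi (y + d) (by rwa [psum_add, hd, add_zero])
        rwa [add_sub_cancel_left] at h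
    refine ⟨-Mavg w, by nth_rw 1 [hw]; exact neg_add_cancel _,
      mem_normalCone_orthant_iff_forall_dot_le.2 ⟨hy, fun s hs => ?_⟩⟩
    have h := hvi (MavgT N s) (by rwa [psum_mavgT hN])
    rw [hw, hPT, psum_mavgT hN, sub_nonneg] at h
    exact h
  · rintro ⟨lam, hw, hlam⟩
    obtain ⟨hy, hdual⟩ := mem_normalCone_orthant_iff_forall_dot_le.1 hlam
    refine ⟨hy, fun y' hy' => ?_⟩
    rw [eq_neg_of_add_eq_zero_left hw, hPT, sub_nonneg]
    exact hdual _ hy'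

section Game

variable {N n m : ℕ} {Ω : Fin N → Set (Vec n)} {f : Fin N → Vec n → Vec n → ℝ}
  {A : Fin N → Matrix (Fin m) (Fin n) ℝ} {b : Fin N → Vec m}
  {x : VecN N n} {y : VecN N m} {σ : Vec n}

lemma isVGNEext_iff :
    isVGNEext Ω f A b x y σ ↔ σ = Mavg x ∧ ∃ g ∈ Fe f x σ, ∃ uw ∈ nconeC (Cset Ω A b) (x, y),
      g + uw.1 = 0 ∧ (∀ j, Psum y j ≤ 0) ∧
        ∀ y' : VecN N m, (∀ j, Psum y' j ≤ 0) → 0 ≤ dotN uw.2 (y' - y) := by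
  constructor
  · rintro ⟨⟨hy, hσ⟩, _, ⟨g, hg, uw, huw, rfl⟩, hvi⟩
    have hx : g + uw.1 = 0 := eq_zero_of_forall_dotN_nonneg fun d => by
      simpa [ip3, dot_eq_dotProduct, dotN_zero_right] using
        hvi (x + d, y, Mavg (x + d)) ⟨hy, rfl⟩
    refine ⟨hσ, g, hg, uw, huw, hx, hy, fun y' hy' => ?_⟩
    simpa [ip3, dot_eq_dotProduct, dotN_zero_right] using hvi (x, y', σ) ⟨hy', hσ⟩
  · rintro ⟨hσ, g, hg, uw, huw, hx, hy, hvi⟩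
    refine ⟨⟨hy, hσ⟩, _, ⟨g, hg, uw, huw, rfl⟩, ?_⟩
    rintro ⟨x', y', σ'⟩ ⟨hy', -⟩
    simpa [ip3, hx, dot_eq_dotProduct, dotN_zero_left] using hvi y' hy'

lemma inZerT_zero_iff {lam : Vec m} :
    inZerT Ω f A b x y σ 0 lam ↔ σ = Mavg x ∧ ∃ g ∈ Fe f x σ, ∃ uw ∈ nconeC (Cset Ω A b) (x, y),
      g + uw.1 = 0 ∧ uw.2 + PsumT N lam = 0 ∧ Psum y ∈ normalCone (orthant m) lam := by
  have hM : MavgT N (0 : Vec n) = 0 := funext fun _ => smul_zero _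
  constructor
  · rintro ⟨g, hg, uw, huw, v, hv, hx, hw, -, hσ, hv'⟩
    rw [hM, sub_zero] at hx
    rw [sub_eq_zero] at hσ hv'
    exact ⟨hσ.symm, g, hg, uw, huw, hx, hw, hv' ▸ hv⟩
  · rintro ⟨hσ, g, hg, uw, huw, hx, hw, hy⟩
    exact ⟨g, hg, uw, huw, Psum y, hy, by rw [hM, sub_zero, hx], hw, rfl,
      sub_eq_zero.2 hσ.symm, sub_self _⟩

end Game

theorem stmt1_general {N n m : ℕ} (hN : 0 < N)
    (Ω : Fin N → Set (Vec n)) (f : Fin N → Vec n → Vec n → ℝ)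
    (A : Fin N → Matrix (Fin m) (Fin n) ℝ) (b : Fin N → Vec m) :
    (∀ (x : VecN N n) (y : VecN N m) (σ : Vec n),
      isVGNEext Ω f A b x y σ ↔
        ∃ lam : Vec m, (∀ j, 0 ≤ lam j) ∧ inZerT Ω f A b x y σ (0 : Vec n) lam) ∧
    (∀ (x : VecN N n) (y : VecN N m) (σ μ : Vec n) (lam : Vec m),
      inZerT Ω f A b x y σ μ lam →
        μ = 0 ∧ σ = Mavg x ∧ ∀ i, y i = (A i).mulVec (x i) - b i) := by
  refine ⟨fun x y σ => ?_, ?_⟩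
  · rw [isVGNEext_iff]
    constructor
    · rintro ⟨hσ, g, hg, uw, huw, hx, hvi⟩
      obtain ⟨lam, hw, hlam⟩ := (psum_nonpos_vi_iff hN).1 hvi
      exact ⟨lam, hlam.1, inZerT_zero_iff.2 ⟨hσ, g, hg, uw, huw, hx, hw, hlam⟩⟩
    · rintro ⟨lam, -, h⟩
      obtain ⟨hσ, g, hg, uw, huw, hx, hw, hlam⟩ := inZerT_zero_iff.1 h
      exact ⟨hσ, g, hg, uw, huw, hx, (psum_nonpos_vi_iff hN).2 ⟨lam, hw, hlam⟩⟩
  · rintro x y σ μ lam ⟨-, -, uw, huw, -, -, -, -, hμ, hσ, -⟩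
    exact ⟨hμ, (sub_eq_zero.1 hσ).symm, fun i => (huw.1 i).2⟩

/-- `(x*,y*,σ*)` is a v-GNE of the extended game iff there is `λ* ≥ 0`
with `(x*,y*,σ*,0,λ*) ∈ zer T`; moreover any zero of `T` has `μ* = 0`, `σ* = M_n x*`
and `y_i* = A_i x_i* - b_i`. -/
theorem stmt1 {N n m : ℕ} (hN : 0 < N) (hn : 0 < n) (hm : 0 < m)
    (Ω : Fin N → Set (Vec n)) (f : Fin N → Vec n → Vec n → ℝ)
    (A : Fin N → Matrix (Fin m) (Fin n) ℝ) (b : Fin N → Vec m)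
    (hΩne : ∀ i, (Ω i).Nonempty) (hΩcp : ∀ i, IsCompact (Ω i))
    (hΩcv : ∀ i, Convex ℝ (Ω i))
    (hfcont : ∀ i, Continuous (fun p : Vec n × Vec n => f i p.1 p.2))
    (hfconv : ∀ i w, ConvexOn ℝ Set.univ (fun z => f i z w))
    (slater : ∃ x0 : VecN N n, (∀ i, x0 i ∈ Ω i) ∧ ∀ j, bigA A x0 j < (∑ i, b i) j) :
    (∀ (x : VecN N n) (y : VecN N m) (σ : Vec n),
      isVGNEext Ω f A b x y σ ↔
        ∃ lam : Vec m, (∀ j, 0 ≤ lam j) ∧ inZerT Ω f A b x y σ (0 : Vec n) lam) ∧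
    (∀ (x : VecN N n) (y : VecN N m) (σ μ : Vec n) (lam : Vec m),
      inZerT Ω f A b x y σ μ lam →
        μ = 0 ∧ σ = Mavg x ∧ ∀ i, y i = (A i).mulVec (x i) - b i) :=
  stmt1_general hN Ω f A b
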